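/- arXiv:2405.03801 — 4 statements merged into one kernel-verified Lean document; each statement's English description precedes it below -/
import Mathlib

section
/- Let T be a DFS tree of a connected undirected graph G rooted at r, and let U be a set of vertices. Call a component C of T \ U internal if the root of C (its vertex closest to r in T) is an ancestor in T of some vertex of U; otherwise C is a hanging subtree. Then for vertices x, y ∉ U, x and y are connected in G \ U if and only if either x and y lie in the same component of T \ U, or there exists an internal component C of T \ U such that both x and y are connected to (a vertex of) C in G \ U. -/
open SimpleGraph

variable {V : Type*}

/-- The graph `G` with the vertices of `S` removed (vertices in `S` become isolated). -/
def delAdj (G : SimpleGraph V) (S : Set V) : SimpleGraph V where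
  Adj u v := G.Adj u v ∧ u ∉ S ∧ v ∉ S
  symm := ⟨fun u v ⟨h, hu, hv⟩ => ⟨h.symm, hv, hu⟩⟩
  loopless := ⟨fun v h => G.loopless.irrefl v h.1⟩

/-- The subgraph of `G` induced on the vertex set `A` (other vertices become isolated). -/
def restrict (G : SimpleGraph V) (A : Set V) : SimpleGraph V where
  Adj u v := G.Adj u v ∧ u ∈ A ∧ v ∈ A
  symm := ⟨fun u v ⟨h, hu, hv⟩ => ⟨h.symm, hv, hu⟩⟩
  loopless := ⟨fun v h => G.loopless.irrefl v h.1⟩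

/-- `C` is a connected component of `G \ S`. -/
def IsComp (G : SimpleGraph V) (S C : Set V) : Prop :=
  ∃ v, v ∉ S ∧ C = {u | (delAdj G S).Reachable v u}

/-- The number of connected components of `G \ S`. -/
noncomputable def numComp (G : SimpleGraph V) (S : Set V) : ℕ :=
  {C : Set V | IsComp G S C}.ncard

/-- The volume of a vertex set `Q`: the number of edges with at least one endpoint in `Q`. -/
noncomputable def vol (G : SimpleGraph V) (Q : Set V) : ℕ :=
  {e ∈ G.edgeSet | ∃ v ∈ Q, v ∈ e}.ncard

/-- `S` is a `k`-shredder: it has `k` vertices and `G \ S` has at least three components. -/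
def IsShredder (G : SimpleGraph V) (k : ℕ) (S : Set V) : Prop :=
  S.ncard = k ∧ 3 ≤ numComp G S

/-- `G` is `k`-vertex-connected: it has more than `k` vertices and stays connected
after removing any set of fewer than `k` vertices. -/
def KConnected (G : SimpleGraph V) (k : ℕ) [Fintype V] : Prop :=
  k < Fintype.card V ∧
    ∀ S : Set V, S.ncard < k → ∀ u v, u ∉ S → v ∉ S → (delAdj G S).Reachable u v

/-- `u` is an ancestor of `v` (or equal to it) in the tree `T` rooted at `r`:
every walk from the root to `v` passes through `u`. -/
def AncOf (T : SimpleGraph V) (r u v : V) : Prop :=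
  ∀ p : T.Walk r v, u ∈ p.support

/-- `IsDFSTree G W r T` : `T` is a spanning tree of the induced graph `G[W]` that can be
produced by a depth-first search from `r ∈ W`:  DFS picks a neighbor `w` of `r`, recursively
explores the whole component of `w` in `G[W \ {r}]`, and then continues from `r` on the rest. -/
inductive IsDFSTree (G : SimpleGraph V) : Set V → V → SimpleGraph V → Prop
  | single (r : V) : IsDFSTree G {r} r ⊥
  | step (W : Set V) (r w : V) (T₁ T₂ : SimpleGraph V)
      (hr : r ∈ W) (hw : w ∈ W) (hadj : G.Adj r w)
      (hT₁ : IsDFSTree G {u | (restrict G (W \ {r})).Reachable w u} w T₁)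
      (hT₂ : IsDFSTree G (W \ {u | (restrict G (W \ {r})).Reachable w u}) r T₂) :
      IsDFSTree G W r (T₁ ⊔ T₂ ⊔ fromEdgeSet {s(r, w)})

/-- `C` is an internal component of `T \ U`: a component whose root (its vertex closest to the
root `r` of `T`, i.e. the vertex of `C` that is an ancestor of all of `C`) is an ancestor of
some vertex of `U`. -/
def InternalComp (T : SimpleGraph V) (r : V) (U C : Set V) : Prop :=
  IsComp T U C ∧ ∃ ρ ∈ C, (∀ v ∈ C, AncOf T r ρ v) ∧ ∃ u ∈ U, AncOf T r ρ u

/-- `Straddles sup A S`: the set `A` (attachments of a bridge, or a candidate) straddles `S`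
with respect to the paths whose supports are `sup i`: on some path an `A`-vertex strictly
precedes an `S`-vertex, and on some path an `A`-vertex strictly succeeds an `S`-vertex. -/
def Straddles [DecidableEq V] {k : ℕ} (sup : Fin k → List V) (A S : Set V) : Prop :=
  (∃ i, ∃ u ∈ A, u ∈ sup i ∧ ∃ s ∈ S, s ∈ sup i ∧
      (sup i).idxOf u < (sup i).idxOf s) ∧
  (∃ j, ∃ v ∈ A, v ∈ sup j ∧ ∃ s ∈ S, s ∈ sup j ∧
      (sup j).idxOf s < (sup j).idxOf v)

/-- `IsBridgeAttach G PiV pedges Γ A` : `Γ` is a bridge of the path system with vertex set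
`PiV` and edge lists `pedges i`, and `A` is its attachment set.  A bridge is either a
connected component of `G \ PiV` (attachments: its neighborhood), or an edge of `G` not on
any of the paths but with both endpoints on the paths (attachments: its two endpoints). -/
def IsBridgeAttach (G : SimpleGraph V) {k : ℕ} (PiV : Set V)
    (pedges : Fin k → List (Sym2 V)) (Γ A : Set V) : Prop :=
  (IsComp G PiV Γ ∧ A = {v | v ∉ Γ ∧ ∃ u ∈ Γ, G.Adj u v}) ∨
  (∃ u v, G.Adj u v ∧ u ∈ PiV ∧ v ∈ PiV ∧ (∀ i, s(u, v) ∉ pedges i) ∧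
    Γ = {u, v} ∧ A = {u, v})

/-
Take a walk from `x` to `y` in `G \ U`. If the endpoints of each of its edges are joined in
`T \ U`, so are `x` and `y`. Otherwise some edge `ab` of the walk crosses between components of
`T \ U`. Since `T` is a DFS tree, `a` is (say) an ancestor of `b`, so the tree path from `a` to
`b` meets `U` in a descendant `u` of `a`. The component of `a` has a root (its vertex of least
depth, an ancestor of the whole component), which is then an ancestor of `u`: the component is
internal, and `x` and `y` both reach `a` along the walk. The converse holds because `T ≤ G`.
-/

namespace SimpleGraph

variable {G H H₁ H₂ T T' : SimpleGraph V} {S U : Set V} {r s a b c d u v z : V}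

lemma delAdj_mono (h : G ≤ H) (S : Set V) : delAdj G S ≤ delAdj H S :=
  fun _ _ ⟨hab, ha, hb⟩ => ⟨h hab, ha, hb⟩

lemma delAdj_le : delAdj G S ≤ G := fun _ _ h => h.1

lemma setOf_restrict_reachable_subset (ha : a ∈ S) :
    {b | (restrict G S).Reachable a b} ⊆ S := by
  rintro b ⟨p⟩
  induction p with
  | nil => exact ha
  | cons hadj _ ih => exact ih hadj.2.2

namespace Walk

lemma reachable_delAdj (p : G.Walk a b) (hp : ∀ z ∈ p.support, z ∉ S) :
    (delAdj G S).Reachable a b := by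
  induction p with
  | nil => rfl
  | cons hadj q ih =>
    have hstep : (delAdj G S).Adj _ _ := ⟨hadj, hp _ (by simp), hp _ (by simp)⟩
    exact hstep.reachable.trans (ih fun z hz => hp z (by simp [hz]))

lemma reachable_of_forall_mem_edges (p : G.Walk a b)
    (h : ∀ u v, s(u, v) ∈ p.edges → H.Reachable u v) : H.Reachable a b := by
  induction p with
  | nil => rfl
  | cons _ q ih =>
    exact (h _ _ (by simp)).trans (ih fun u v huv => h u v (by simp [huv]))

lemma support_subset_of_adj (hS : ∀ a b, G.Adj a b → a ∈ S) (p : G.Walk a b) (ha : a ∈ S) :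
    ∀ z ∈ p.support, z ∈ S := by
  induction p with
  | nil => simpa using ha
  | cons hadj q ih =>
    simp only [support_cons, List.mem_cons, forall_eq_or_imp]
    exact ⟨ha, ih (hS _ _ hadj.symm)⟩

lemma edges_subset_left_of_sup (hS₁ : ∀ a b, H₁.Adj a b → a ∈ S)
    (hS₂ : ∀ a b, H₂.Adj a b → a ∉ S) (p : (H₁ ⊔ H₂).Walk a b) (ha : a ∈ S) :
    ∀ e ∈ p.edges, e ∈ H₁.edgeSet := by
  induction p with
  | nil => simp
  | cons hadj q ih =>
    have h₁ : H₁.Adj _ _ := hadj.resolve_right fun h₂ => hS₂ _ _ h₂ ha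
    simp only [edges_cons, List.mem_cons, forall_eq_or_imp]
    exact ⟨h₁, ih (hS₁ _ _ h₁.symm)⟩

end Walk

lemma not_reachable_sup_of_separated (hS₁ : ∀ a b, H₁.Adj a b → a ∈ S)
    (hS₂ : ∀ a b, H₂.Adj a b → a ∉ S) (ha : a ∈ S) (hb : b ∉ S) :
    ¬(H₁ ⊔ H₂).Reachable a b := by
  rintro ⟨p⟩
  exact hb ((p.transfer H₁ (p.edges_subset_left_of_sup hS₁ hS₂ ha)).support_subset_of_adj
    hS₁ ha b (by simp))

lemma isAcyclic_sup_of_separated (hS₁ : ∀ a b, H₁.Adj a b → a ∈ S)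
    (hS₂ : ∀ a b, H₂.Adj a b → a ∉ S) (h₁ : H₁.IsAcyclic) (h₂ : H₂.IsAcyclic) :
    (H₁ ⊔ H₂).IsAcyclic := by
  intro v c hc
  by_cases hv : v ∈ S
  · exact h₁ _ (hc.transfer (c.edges_subset_left_of_sup hS₁ hS₂ hv))
  · let c' : (H₂ ⊔ H₁).Walk v v := c.mapLe (sup_comm H₁ H₂).le
    have hc' : c'.IsCycle := hc.mapLe _
    refine h₂ _ (hc'.transfer (c'.edges_subset_left_of_sup (S := Sᶜ) hS₂ ?_ hv))
    exact fun a b hab => not_not.mpr (hS₁ a b hab)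

lemma ancOf_root (T : SimpleGraph V) (r v : V) : AncOf T r r v := fun p => p.start_mem_support

lemma AncOf.trans (hab : AncOf T r a b) (hbc : AncOf T r b c) : AncOf T r a c := by
  classical
  intro p
  exact p.support_takeUntil_subset_support (hbc p) (hab (p.takeUntil b (hbc p)))

/-- A root walk to `u` avoiding `a` would extend along the path to one reaching `b`. -/
lemma AncOf.of_mem_support_of_isPath (hab : AncOf T r a b) {s : T.Walk a b} (hs : s.IsPath)
    (hu : u ∈ s.support) (hua : u ≠ a) : AncOf T r a u := by
  classical
  intro w
  have hu' : u ∈ s.reverse.support := by simpa using hu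
  have hrest : a ∉ (s.reverse.takeUntil u hu').reverse.support := by
    simpa using Walk.endpoint_notMem_support_takeUntil hs.reverse hu' hua.symm
  by_contra haw
  have := hab (w.append (s.reverse.takeUntil u hu').reverse)
  rw [Walk.mem_support_append_iff] at this
  tauto

lemma IsAcyclic.ancOf_iff_mem_support (hT : T.IsAcyclic) {p : T.Walk r v} (hp : p.IsPath) :
    AncOf T r u v ↔ u ∈ p.support := by
  refine ⟨fun h => h p, fun hu q => ?_⟩
  classical
  have hq : q.toPath = ⟨p, hp⟩ := (hT.subsingleton_path r v).elim _ _
  exact q.support_toPath_subset_support (by rw [hq]; exact hu)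

lemma IsAcyclic.ancOf_of_support_subset (hT : T.IsAcyclic) {p : T.Walk r b} (hp : p.IsPath)
    {q : T'.Walk s b} (hq : q.support ⊆ p.support) (h : AncOf T' s a b) : AncOf T r a b :=
  (hT.ancOf_iff_mem_support hp).2 (hq (h q))

lemma IsAcyclic.ancOf_iff_of_dist_eq (hT : T.IsAcyclic) (hdc : T.Adj d c) (hrd : T.Reachable r d)
    (hdist : T.dist r c = T.dist r d + 1) : AncOf T r z c ↔ z = c ∨ AncOf T r z d := by
  classical
  obtain ⟨p, hp, hplen⟩ := hrd.exists_path_of_dist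
  have hc : c ∉ p.support := fun hc => by
    have := T.dist_le (p.takeUntil c hc)
    have := p.length_takeUntil_le_length hc
    omega
  rw [hT.ancOf_iff_mem_support (hp.concat hc hdc), hT.ancOf_iff_mem_support hp,
    Walk.support_concat, List.mem_append, List.mem_singleton, or_comm]

/-- The root of a component is its vertex of least depth. -/
lemma IsAcyclic.exists_root (hT : T.IsAcyclic) (hconn : T.Preconnected) (hH : H ≤ T) (v₀ : V) :
    ∃ ρ, H.Reachable v₀ ρ ∧ ∀ v, H.Reachable v₀ v → AncOf T r ρ v := by
  obtain ⟨ρ, hρ, hmin⟩ : ∃ ρ, H.Reachable v₀ ρ ∧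
      ∀ v, H.Reachable v₀ v → T.dist r ρ ≤ T.dist r v :=
    ⟨_, (Function.argminOn_mem (T.dist r) {v | H.Reachable v₀ v} ⟨v₀, .rfl⟩),
      fun v hv => Function.argminOn_le (T.dist r) _ hv⟩
  refine ⟨ρ, hρ, fun v hv => ?_⟩
  have hρv : H.Reachable ρ v := hρ.symm.trans hv
  rw [reachable_iff_reflTransGen] at hρv
  induction hρv with
  | refl => exact fun p => p.end_mem_support
  | @tail c d hρc hcd ih =>
    have hρc' : H.Reachable v₀ c := hρ.trans ((reachable_iff_reflTransGen _ _).2 hρc)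
    have hcd' : T.Adj c d := hH hcd
    rcases hT.dist_eq_dist_add_one_of_adj_of_reachable r hcd' (hconn r c) with h | h
    · rcases (hT.ancOf_iff_of_dist_eq hcd'.symm (hconn r d) h).1 (ih hρc') with rfl | h'
      · have := hmin d (hρc'.trans hcd.reachable)
        omega
      · exact h'
    · exact (hT.ancOf_iff_of_dist_eq hcd' (hconn r c) h).2 (.inr (ih hρc'))

lemma exists_ancOf_mem_of_not_reachable (hconn : T.Preconnected) (hab : AncOf T r a b)
    (ha : a ∉ U) (hn : ¬(delAdj T U).Reachable a b) : ∃ u ∈ U, AncOf T r a u := by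
  obtain ⟨s, hs⟩ := hconn.exists_isPath a b
  have : ∃ u ∈ s.support, u ∈ U := by
    by_contra! h
    exact hn (s.reachable_delAdj h)
  obtain ⟨u, hus, huU⟩ := this
  exact ⟨u, huU, hab.of_mem_support_of_isPath hs hus fun h => ha (h ▸ huU)⟩

lemma internalComp_of_ancOf (hT : T.IsAcyclic) (hconn : T.Preconnected) (hab : AncOf T r a b)
    (ha : a ∉ U) (hn : ¬(delAdj T U).Reachable a b) :
    InternalComp T r U {z | (delAdj T U).Reachable a z} := by
  obtain ⟨ρ, hρ, hroot⟩ := hT.exists_root (r := r) hconn delAdj_le a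
  obtain ⟨u, huU, hau⟩ := exists_ancOf_mem_of_not_reachable hconn hab ha hn
  exact ⟨⟨a, ha, rfl⟩, ρ, hρ, hroot, u, huU, (hroot a .rfl).trans hau⟩

end SimpleGraph

namespace SimpleGraph.IsDFSTree

variable {G T : SimpleGraph V} {W : Set V} {r a b v : V}

lemma le (h : IsDFSTree G W r T) : T ≤ G := by
  induction h with
  | single => exact bot_le
  | step W r w T₁ T₂ _ _ hrw _ _ ih₁ ih₂ =>
    refine sup_le (sup_le ih₁ ih₂) ?_
    simp [hrw]

lemma mem_of_adj (h : IsDFSTree G W r T) (hab : T.Adj a b) : a ∈ W := by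
  induction h generalizing a b with
  | single => exact absurd hab (by simp)
  | step W r w T₁ T₂ hr hw hrw _ _ ih₁ ih₂ =>
    rcases hab with (h₁ | h₂) | he
    · exact (setOf_restrict_reachable_subset (S := W \ {r}) ⟨hw, hrw.ne'⟩ (ih₁ h₁)).1
    · exact (ih₂ h₂).1
    · obtain ⟨rfl, rfl⟩ | ⟨rfl, rfl⟩ := Sym2.eq_iff.mp he.1 <;> assumption

lemma reachable (h : IsDFSTree G W r T) (hv : v ∈ W) : T.Reachable r v := by
  induction h generalizing v with
  | single => rw [hv]
  | step W r w T₁ T₂ _ _ hrw _ _ ih₁ ih₂ =>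
    by_cases hv₁ : v ∈ {u | (restrict G (W \ {r})).Reachable w u}
    · have hrw' : (T₁ ⊔ T₂ ⊔ fromEdgeSet {s(r, w)}).Adj r w := .inr (by simpa using hrw.ne)
      exact hrw'.reachable.trans ((ih₁ hv₁).mono (le_sup_left.trans le_sup_left))
    · exact (ih₂ ⟨hv, hv₁⟩).mono (le_sup_right.trans le_sup_left)

lemma isAcyclic (h : IsDFSTree G W r T) : T.IsAcyclic := by
  induction h with
  | single => exact isAcyclic_bot
  | step W r w T₁ T₂ _ hw hrw hT₁ hT₂ ih₁ ih₂ =>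
    set W₁ := {u | (restrict G (W \ {r})).Reachable w u}
    have hS₁ : ∀ a b, T₁.Adj a b → a ∈ W₁ := fun a b => hT₁.mem_of_adj
    have hS₂ : ∀ a b, T₂.Adj a b → a ∉ W₁ := fun a b hab => (hT₂.mem_of_adj hab).2
    have hW₁ : W₁ ⊆ W \ {r} := setOf_restrict_reachable_subset ⟨hw, hrw.ne'⟩
    have hr : r ∉ W₁ := fun hr => (hW₁ hr).2 rfl
    exact (isAcyclic_sup_of_separated hS₁ hS₂ ih₁ ih₂).sup_edge_of_not_reachable
      fun hwr => not_reachable_sup_of_separated hS₁ hS₂ (Reachable.refl w) hr hwr.symm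

lemma ancOf_or_ancOf (h : IsDFSTree G W r T) (hab : G.Adj a b) (ha : a ∈ W) (hb : b ∈ W) :
    AncOf T r a b ∨ AncOf T r b a := by
  induction h generalizing a b with
  | single => exact absurd (ha.trans hb.symm) hab.ne
  | step W r w T₁ T₂ hr hw hrw hT₁ hT₂ ih₁ ih₂ =>
    set W₁ := {u | (restrict G (W \ {r})).Reachable w u}
    set T := T₁ ⊔ T₂ ⊔ fromEdgeSet {s(r, w)}
    have hT := (IsDFSTree.step W r w T₁ T₂ hr hw hrw hT₁ hT₂).isAcyclic
    have hW₁ : W₁ ⊆ W \ {r} := setOf_restrict_reachable_subset ⟨hw, hrw.ne'⟩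
    have lift₁ : ∀ {a b}, b ∈ W₁ → AncOf T₁ w a b → AncOf T r a b := by
      intro a b hb hab
      obtain ⟨q, hq⟩ := (hT₁.reachable hb).exists_isPath
      have hrw' : T.Adj r w := .inr (by simpa using hrw.ne)
      have hrq : r ∉ q.support := fun hrq =>
        (hW₁ (q.support_subset_of_adj (fun _ _ => hT₁.mem_of_adj) (.refl w) r hrq)).2 rfl
      refine hT.ancOf_of_support_subset (p := .cons hrw' (q.mapLe (le_sup_left.trans le_sup_left)))
        (q := q) ?_ (by simp) hab
      exact (Walk.cons_isPath_iff _ _).2 ⟨hq.mapLe _, by simpa using hrq⟩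
    have lift₂ : ∀ {a b}, b ∈ W \ W₁ → AncOf T₂ r a b → AncOf T r a b := by
      intro a b hb hab
      obtain ⟨q, hq⟩ := (hT₂.reachable hb).exists_isPath
      exact hT.ancOf_of_support_subset
        (hq.mapLe (le_sup_right.trans le_sup_left)) (q := q) (by simp) hab
    have hclosed : ∀ {a b}, G.Adj a b → a ∈ W₁ → b ∈ W → b = r ∨ b ∈ W₁ := by
      intro a b hab ha hb
      by_cases hbr : b = r
      · exact .inl hbr
      · exact .inr (Reachable.trans ha (Adj.reachable ⟨hab, hW₁ ha, hb, hbr⟩))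
    by_cases ha₁ : a ∈ W₁ <;> by_cases hb₁ : b ∈ W₁
    · exact (ih₁ hab ha₁ hb₁).imp (lift₁ hb₁) (lift₁ ha₁)
    · obtain rfl := (hclosed hab ha₁ hb).resolve_right hb₁
      exact .inr (ancOf_root T b a)
    · obtain rfl := (hclosed hab.symm hb₁ ha).resolve_right ha₁
      exact .inl (ancOf_root T a b)
    · exact (ih₂ hab ⟨ha, ha₁⟩ ⟨hb, hb₁⟩).imp (lift₂ ⟨hb, hb₁⟩) (lift₂ ⟨ha, ha₁⟩)

end SimpleGraph.IsDFSTree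

theorem stmt_4_general (G : SimpleGraph V) (r : V) (T : SimpleGraph V)
    (hT : IsDFSTree G Set.univ r T) (U : Set V)
    (x y : V) :
    (delAdj G U).Reachable x y ↔
      (delAdj T U).Reachable x y ∨
        ∃ C, InternalComp T r U C ∧ (∃ c ∈ C, (delAdj G U).Reachable x c) ∧
          ∃ c ∈ C, (delAdj G U).Reachable y c := by
  classical
  have hTG : delAdj T U ≤ delAdj G U := delAdj_mono hT.le U
  have hconn : T.Preconnected := fun u v =>
    (hT.reachable (Set.mem_univ u)).symm.trans (hT.reachable (Set.mem_univ v))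
  constructor
  · rintro ⟨p⟩
    by_cases hp : ∀ a b, s(a, b) ∈ p.edges → (delAdj T U).Reachable a b
    · exact .inl (p.reachable_of_forall_mem_edges hp)
    push Not at hp
    obtain ⟨a, b, hab, hn⟩ := hp
    have hadj := p.adj_of_mem_edges hab
    have ha := p.fst_mem_support_of_mem_edges hab
    obtain ⟨c, hc, hac⟩ : ∃ c, InternalComp T r U {z | (delAdj T U).Reachable c z} ∧
        (delAdj G U).Reachable a c := by
      rcases hT.ancOf_or_ancOf hadj.1 (Set.mem_univ a) (Set.mem_univ b) with h | h
      · exact ⟨a, internalComp_of_ancOf hT.isAcyclic hconn h hadj.2.1 hn, .rfl⟩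
      · exact ⟨b, internalComp_of_ancOf hT.isAcyclic hconn h hadj.2.2 (hn ·.symm),
          hadj.reachable⟩
    exact .inr ⟨_, hc, ⟨c, .rfl, (p.takeUntil a ha).reachable.trans hac⟩,
      c, .rfl, (p.dropUntil a ha).reachable.symm.trans hac⟩
  · rintro (h | ⟨C, ⟨⟨v, -, rfl⟩, -⟩, ⟨c₁, hc₁, hx⟩, c₂, hc₂, hy⟩)
    · exact h.mono hTG
    · exact hx.trans (((Reachable.symm hc₁).trans hc₂ |>.mono hTG).trans hy.symm)

/-- for a DFS tree `T` of a connected graph `G` rooted at `r` and a vertex set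
`U`, vertices `x, y ∉ U` are connected in `G \ U` iff they are in the same component of
`T \ U` or both are connected in `G \ U` to a common internal component of `T \ U`. -/
theorem stmt_4 (G : SimpleGraph V) (hG : G.Connected) (r : V) (T : SimpleGraph V)
    (hT : IsDFSTree G Set.univ r T) (U : Set V)
    (x y : V) (hx : x ∉ U) (hy : y ∉ U) :
    (delAdj G U).Reachable x y ↔
      (delAdj T U).Reachable x y ∨
        ∃ C, InternalComp T r U C ∧ (∃ c ∈ C, (delAdj G U).Reachable x c) ∧
          ∃ c ∈ C, (delAdj G U).Reachable y c :=
  stmt_4_general G r T hT U x y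
end

section
/- Let T be a DFS tree of a connected undirected graph G rooted at r, and let U be a set of k vertices. Then the number of internal components of T \ U (components whose root in T is an ancestor of some vertex of U) is at most k. -/
open SimpleGraph

variable {V : Type*}

/-!
Only the tree structure of a DFS tree matters: it is acyclic and reaches every vertex from `r`.
If the root `ρ` of a component `C` of `T \ U` is an ancestor of a vertex of `U`, follow the tree
path from `ρ` down to the first vertex `u ∈ U`; the parent of `u` lies in `C`. The resulting map
`C ↦ u` into `U` is injective, since `u` has a single parent and components are disjoint.
-/

lemma notMem_of_reachable_delAdj {G : SimpleGraph V} {S : Set V} {a b : V}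
    (h : (delAdj G S).Reachable a b) (ha : a ∉ S) : b ∉ S := by
  obtain ⟨p⟩ := h.symm
  cases p with
  | nil => exact ha
  | cons hadj _ => exact hadj.2.1

lemma mem_of_reachable_restrict {G : SimpleGraph V} {A : Set V} {a b : V}
    (h : (restrict G A).Reachable a b) (ha : a ∈ A) : b ∈ A := by
  obtain ⟨p⟩ := h.symm
  cases p with
  | nil => exact ha
  | cons hadj _ => exact hadj.2.1

lemma reachable_delAdj_of_forall_notMem {G : SimpleGraph V} {S : Set V} {a b : V}
    (p : G.Walk a b) (hp : ∀ z ∈ p.support, z ∉ S) : (delAdj G S).Reachable a b := by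
  induction p with
  | nil => rfl
  | cons hadj p ih =>
    simp only [Walk.support_cons, List.mem_cons, forall_eq_or_imp] at hp
    exact Reachable.trans (Adj.reachable ⟨hadj, hp.1, hp.2 _ p.start_mem_support⟩) (ih hp.2)

lemma IsComp.notMem {G : SimpleGraph V} {S C : Set V} (hC : IsComp G S C) {y : V} (hy : y ∈ C) :
    y ∉ S := by
  obtain ⟨v, hv, rfl⟩ := hC
  exact notMem_of_reachable_delAdj hy hv

lemma IsComp.eq_of_mem {G : SimpleGraph V} {S C₁ C₂ : Set V} (h₁ : IsComp G S C₁)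
    (h₂ : IsComp G S C₂) {y : V} (hy₁ : y ∈ C₁) (hy₂ : y ∈ C₂) : C₁ = C₂ := by
  obtain ⟨v₁, -, rfl⟩ := h₁
  obtain ⟨v₂, -, rfl⟩ := h₂
  ext z
  exact ⟨fun h => hy₂.trans (hy₁.symm.trans h), fun h => hy₁.trans (hy₂.symm.trans h)⟩

namespace SimpleGraph

lemma Walk.exists_append_cons_of_notMem_of_mem {G : SimpleGraph V} {S : Set V} {a b : V}
    (q : G.Walk a b) (ha : a ∉ S) (hb : b ∈ S) :
    ∃ (y u : V) (q₁ : G.Walk a y) (h : G.Adj y u) (q₂ : G.Walk u b),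
      u ∈ S ∧ (∀ z ∈ q₁.support, z ∉ S) ∧ q = q₁.append (Walk.cons h q₂) := by
  induction q with
  | nil => exact absurd hb ha
  | @cons a c b hadj q ih =>
    by_cases hc : c ∈ S
    · exact ⟨a, c, .nil, hadj, q, hc, by simpa using ha, rfl⟩
    · obtain ⟨y, u, q₁, h, q₂, hu, hq₁, rfl⟩ := ih hc hb
      refine ⟨y, u, .cons hadj q₁, h, q₂, hu, ?_, rfl⟩
      simpa [Walk.support_cons] using ⟨ha, hq₁⟩

lemma Walk.edges_subset_of_adj_closed {G H : SimpleGraph V} {S : Set V}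
    (hS : ∀ u v, G.Adj u v → u ∈ S → H.Adj u v ∧ v ∈ S) {a b : V} (p : G.Walk a b) (ha : a ∈ S) :
    b ∈ S ∧ ∀ e ∈ p.edges, e ∈ H.edgeSet := by
  induction p with
  | nil => simpa using ha
  | cons hadj p ih =>
    obtain ⟨hH, hc⟩ := hS _ _ hadj ha
    obtain ⟨hb, hp⟩ := ih hc
    exact ⟨hb, by simpa [Walk.edges_cons] using ⟨hH, hp⟩⟩

lemma sup_adj_closed {T₁ T₂ : SimpleGraph V} {W : Set V} (h₁ : ∀ u v, T₁.Adj u v → u ∈ W)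
    (h₂ : ∀ u v, T₂.Adj u v → u ∉ W) :
    ∀ u v, (T₁ ⊔ T₂).Adj u v → u ∈ W → T₁.Adj u v ∧ v ∈ W := by
  rintro u v (h | h) hu
  · exact ⟨h, h₁ _ _ h.symm⟩
  · exact absurd hu (h₂ _ _ h)

lemma isAcyclic_sup_of_adj_closed {T₁ T₂ : SimpleGraph V} {W : Set V}
    (hT₁ : T₁.IsAcyclic) (hT₂ : T₂.IsAcyclic) (h₁ : ∀ u v, T₁.Adj u v → u ∈ W)
    (h₂ : ∀ u v, T₂.Adj u v → u ∉ W) :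
    (T₁ ⊔ T₂).IsAcyclic := by
  intro v c hc
  obtain ⟨x, hvx, -, -⟩ := Walk.not_nil_iff.mp hc.not_nil
  rcases hvx with hvx | hvx
  · have hE := (Walk.edges_subset_of_adj_closed (sup_adj_closed h₁ h₂) c (h₁ _ _ hvx)).2
    exact hT₁ _ (hc.transfer hE)
  · have hS := sup_adj_closed (W := Wᶜ) h₂ (fun u v h => not_not.mpr (h₁ u v h))
    rw [sup_comm] at hS
    have hE := (Walk.edges_subset_of_adj_closed hS c (h₂ _ _ hvx)).2
    exact hT₂ _ (hc.transfer hE)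

end SimpleGraph

namespace IsDFSTree

variable {G : SimpleGraph V} {W : Set V} {r : V} {T : SimpleGraph V}

lemma subtree_subset {w : V} (hw : w ∈ W) (hadj : G.Adj r w) :
    {u | (restrict G (W \ {r})).Reachable w u} ⊆ W \ {r} :=
  fun _ hu => mem_of_reachable_restrict hu ⟨hw, hadj.ne'⟩

lemma adj_mem (h : IsDFSTree G W r T) {u v : V} (huv : T.Adj u v) : u ∈ W := by
  induction h generalizing u v with
  | single r => exact absurd huv (by simp)
  | step W r w T₁ T₂ hr hw hadj hT₁ hT₂ ih₁ ih₂ =>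
    rcases huv with (h | h) | h
    · exact (subtree_subset hw hadj (ih₁ h)).1
    · exact (ih₂ h).1
    · obtain ⟨rfl, rfl⟩ | ⟨rfl, rfl⟩ := (edge_adj _ _ _ _).mp h |>.1
      exacts [hr, hw]

lemma reachable (h : IsDFSTree G W r T) {v : V} (hv : v ∈ W) : T.Reachable r v := by
  induction h generalizing v with
  | single r => rw [Set.mem_singleton_iff.mp hv]
  | step W r w T₁ T₂ hr hw hadj hT₁ hT₂ ih₁ ih₂ =>
    by_cases hv₁ : v ∈ {u | (restrict G (W \ {r})).Reachable w u}
    · have hrw : (T₁ ⊔ T₂ ⊔ fromEdgeSet {s(r, w)}).Adj r w :=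
        Or.inr ((fromEdgeSet_adj _).mpr ⟨rfl, hadj.ne⟩)
      exact hrw.reachable.trans ((ih₁ hv₁).mono (le_sup_of_le_left le_sup_left))
    · exact (ih₂ ⟨hv, hv₁⟩).mono (le_sup_of_le_left le_sup_right)

/-- The subtree of `w` lives on the component of `w` in `G[W \ {r}]` and the rest of the tree on
its complement, so the two are vertex-disjoint and the edge `rw` joins different components. -/
lemma isAcyclic (h : IsDFSTree G W r T) : T.IsAcyclic := by
  induction h with
  | single r => exact isAcyclic_bot
  | step W r w T₁ T₂ hr hw hadj hT₁ hT₂ ih₁ ih₂ =>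
    set W₁ := {u | (restrict G (W \ {r})).Reachable w u}
    have h₁ : ∀ u v, T₁.Adj u v → u ∈ W₁ := fun _ _ h => hT₁.adj_mem h
    have h₂ : ∀ u v, T₂.Adj u v → u ∉ W₁ := fun _ _ h => (hT₂.adj_mem h).2
    refine (isAcyclic_sup_of_adj_closed ih₁ ih₂ h₁ h₂).sup_edge_of_not_reachable ?_
    rintro ⟨p⟩
    have hrW₁ := (Walk.edges_subset_of_adj_closed (sup_adj_closed h₁ h₂) p.reverse
      (Reachable.refl w)).1
    exact (subtree_subset hw hadj hrW₁).2 rfl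

end IsDFSTree

namespace AncOf

variable {T : SimpleGraph V} {r : V}

lemma of_mem_support_of_isPath (hT : T.IsAcyclic) {v x : V} {P : T.Walk r v} (hP : P.IsPath)
    (hx : x ∈ P.support) : AncOf T r x v := by
  classical
  intro q
  have hq : q.bypass = P := congrArg Subtype.val
    ((hT.subsingleton_path r v).elim ⟨q.bypass, q.bypass_isPath⟩ ⟨P, hP⟩)
  exact q.support_bypass_subset_support (hq ▸ hx)

lemma of_adj {a u v : V} (h : AncOf T r a u) (hvu : T.Adj v u) (hau : a ≠ u) : AncOf T r a v := by
  intro q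
  have ha := h (q.concat hvu)
  rw [Walk.support_concat, List.mem_append, List.mem_singleton] at ha
  exact ha.resolve_right hau

lemma antisymm {a b : V} (hb : T.Reachable r b) (hab : AncOf T r a b) (hba : AncOf T r b a) :
    a = b := by
  classical
  by_contra hne
  obtain ⟨p⟩ := hb
  obtain ⟨q, s, -, -, hqs⟩ := p.bypass_isPath.mem_support_iff_exists_append.mp (hab p.bypass)
  exact (hqs ▸ p.bypass_isPath).ne_of_mem_support_of_append (Ne.symm hne) (hba q)
    s.end_mem_support rfl

lemma eq_of_adj {u y₁ y₂ : V} (hy₂ : T.Reachable r y₂) (h₁ : AncOf T r y₁ u)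
    (h₂ : AncOf T r y₂ u) (hadj₁ : T.Adj y₁ u) (hadj₂ : T.Adj y₂ u) : y₁ = y₂ :=
  antisymm hy₂ (h₁.of_adj hadj₂ hadj₁.ne) (h₂.of_adj hadj₁ hadj₂.ne)

end AncOf

section InternalComp

variable {T : SimpleGraph V} {r : V} {U : Set V}

lemma IsComp.exists_adj_ancOf (hT : T.IsAcyclic) {C : Set V} (hC : IsComp T U C) {ρ u₀ : V}
    (hρ : ρ ∈ C) (hu₀ : u₀ ∈ U) (hρu₀ : AncOf T r ρ u₀) (hreach : T.Reachable r u₀) :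
    ∃ u ∈ U, ∃ y ∈ C, T.Adj y u ∧ AncOf T r y u := by
  classical
  obtain ⟨P, hP⟩ := hreach.exists_isPath
  obtain ⟨P₁, Q, -, -, rfl⟩ := hP.mem_support_iff_exists_append.mp (hρu₀ P)
  obtain ⟨y, u, q₁, hyu, q₂, hu, hq₁, rfl⟩ :=
    Q.exists_append_cons_of_notMem_of_mem (hC.notMem hρ) hu₀
  have hR : ((P₁.append q₁).concat hyu).IsPath := by
    have hsplit :
        ((P₁.append q₁).concat hyu).append q₂ = P₁.append (q₁.append (.cons hyu q₂)) := by
      rw [Walk.concat_append, Walk.append_assoc]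
    exact (hsplit ▸ hP).of_append_left
  refine ⟨u, hu, y, ?_, hyu, AncOf.of_mem_support_of_isPath hT hR (by simp)⟩
  obtain ⟨v, -, rfl⟩ := hC
  exact hρ.trans (reachable_delAdj_of_forall_notMem q₁ hq₁)

lemma ncard_setOf_internalComp_le (hT : T.IsAcyclic) (hreach : ∀ v, T.Reachable r v)
    (hU : U.Finite) : {C | InternalComp T r U C}.ncard ≤ U.ncard := by
  have hex : ∀ C ∈ {C | InternalComp T r U C}, ∃ u ∈ U, ∃ y ∈ C, T.Adj y u ∧ AncOf T r y u :=
    fun _ ⟨hC, _, hρ, _, _, hu₀, hρu₀⟩ => hC.exists_adj_ancOf hT hρ hu₀ hρu₀ (hreach _)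
  have : Nonempty V := ⟨r⟩
  choose! f hfU y hyC hadj hanc using hex
  refine Set.ncard_le_ncard_of_injOn f hfU ?_ hU
  intro C₁ h₁ C₂ h₂ hf
  have hy : y C₁ = y C₂ := AncOf.eq_of_adj (hreach _) (hf ▸ hanc C₁ h₁) (hanc C₂ h₂)
    (hf ▸ hadj C₁ h₁) (hadj C₂ h₂)
  exact h₁.1.eq_of_mem h₂.1 (hyC C₁ h₁) (hy ▸ hyC C₂ h₂)

end InternalComp

theorem stmt_5_general [Fintype V] (G : SimpleGraph V) (r : V)
    (T : SimpleGraph V) (hT : IsDFSTree G Set.univ r T)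
    (k : ℕ) (U : Set V) (hU : U.ncard = k) :
    {C : Set V | InternalComp T r U C}.ncard ≤ k :=
  hU ▸ ncard_setOf_internalComp_le hT.isAcyclic (fun _ => hT.reachable (Set.mem_univ _))
    U.toFinite

/-- for a DFS tree `T` of a connected graph `G` rooted at `r` and a set `U` of
`k` vertices, the number of internal components of `T \ U` is at most `k`. -/
theorem stmt_5 [Fintype V] (G : SimpleGraph V) (hG : G.Connected) (r : V)
    (T : SimpleGraph V) (hT : IsDFSTree G Set.univ r T)
    (k : ℕ) (U : Set V) (hU : U.ncard = k) :
    {C : Set V | InternalComp T r U C}.ncard ≤ k :=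
  stmt_5_general G r T hT k U hU
end

section
/- Let x, y be distinct vertices of a k-vertex-connected graph G and Π a set of k openly-disjoint simple paths from x to y. Let S be a candidate with respect to Π, that is, S = N(Q) for some component Q of G \ Π with |S| = k and |S ∩ π| = 1 for every π ∈ Π. If some bridge of Π straddles S, then x and y are connected in G \ S. -/
open SimpleGraph

variable {V : Type*}

/-! A vertex of a path that strictly precedes the unique vertex of `S` on it is joined to `x`
in `G \ S` by the initial segment of the path, and symmetrically a vertex after the `S`-vertex
is joined to `y` by the final segment. A straddling bridge supplies one attachment of each kind,
and it joins them while avoiding `S`, because `S = N(Q)` lies on the paths while the interior of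
a bridge does not. -/

lemma List.idxOf_append_lt_idxOf_append {α : Type*} [DecidableEq α] {l₁ l₂ : List α} {a b : α}
    (ha : a ∈ l₁) (hb : b ∉ l₁) : (l₁ ++ l₂).idxOf a < (l₁ ++ l₂).idxOf b := by
  rw [List.idxOf_append_of_mem ha, List.idxOf_append_of_notMem hb]
  have := List.idxOf_lt_length_iff.mpr ha
  omega

lemma List.notMem_of_idxOf_ne {α : Type*} [DecidableEq α] {l : List α} {S : Set α}
    (hS : (S ∩ {v | v ∈ l}).Subsingleton) {s w : α} (hs : s ∈ S) (hsl : s ∈ l) (hwl : w ∈ l)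
    (hne : l.idxOf w ≠ l.idxOf s) : w ∉ S :=
  fun hw => hne (congrArg l.idxOf (hS ⟨hw, hwl⟩ ⟨hs, hsl⟩))

section

variable {G : SimpleGraph V} {P S C : Set V}

lemma delAdj_anti (h : S ⊆ P) : delAdj G P ≤ delAdj G S :=
  fun _ _ ha => ⟨ha.1, fun c => ha.2.1 (h c), fun c => ha.2.2 (h c)⟩

lemma delAdj_adj {u v : V} (h : G.Adj u v) (hu : u ∉ S) (hv : v ∉ S) : (delAdj G S).Adj u v :=
  ⟨h, hu, hv⟩

lemma SimpleGraph.Reachable.notMem_of_delAdj {a b : V} (h : (delAdj G P).Reachable a b)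
    (ha : a ∉ P) : b ∉ P := by
  obtain ⟨w⟩ := h
  induction w with
  | nil => exact ha
  | cons h' _ ih => exact ih h'.2.2

lemma SimpleGraph.Walk.reachable_delAdj_s7 {a b : V} (w : G.Walk a b)
    (h : ∀ v ∈ w.support, v ∉ S) : (delAdj G S).Reachable a b := by
  induction w with
  | nil => rfl
  | cons h' w ih =>
      exact (delAdj_adj h' (h _ (by simp)) (h _ (by simp))).reachable.trans
        (ih fun v hv => h v (List.mem_cons_of_mem _ hv))

lemma IsComp.notMem_s7 (hC : IsComp G P C) {v : V} (hv : v ∈ C) : v ∉ P := by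
  obtain ⟨r, hr, rfl⟩ := hC
  exact hv.notMem_of_delAdj hr

lemma IsComp.nbhd_subset (hC : IsComp G P C) : {v | v ∉ C ∧ ∃ u ∈ C, G.Adj u v} ⊆ P := by
  rintro v ⟨hvC, u, huC, huv⟩
  by_contra hvP
  obtain ⟨r, hr, rfl⟩ := hC
  exact hvC (huC.trans (delAdj_adj huv (huC.notMem_of_delAdj hr) hvP).reachable)

lemma IsComp.reachable_delAdj_of_adj (hC : IsComp G P C) (hSP : S ⊆ P) {u u' v v' : V}
    (hu' : u' ∈ C) (hv' : v' ∈ C) (hu : G.Adj u' u) (hv : G.Adj v' v) (huS : u ∉ S)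
    (hvS : v ∉ S) : (delAdj G S).Reachable u v := by
  have hu'S : u' ∉ S := fun h => hC.notMem_s7 hu' (hSP h)
  have hv'S : v' ∉ S := fun h => hC.notMem_s7 hv' (hSP h)
  obtain ⟨r, -, rfl⟩ := hC
  have hmid : (delAdj G S).Reachable u' v' := (hu'.symm.trans hv').mono (delAdj_anti hSP)
  exact (delAdj_adj hu.symm huS hu'S).reachable.trans
    (hmid.trans (delAdj_adj hv hv'S hvS).reachable)

lemma IsBridgeAttach.reachable_delAdj_s7 {k : ℕ} {pedges : Fin k → List (Sym2 V)} {Γ A : Set V}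
    (hbr : IsBridgeAttach G P pedges Γ A) (hSP : S ⊆ P) {u v : V} (hu : u ∈ A) (hv : v ∈ A)
    (huS : u ∉ S) (hvS : v ∉ S) : (delAdj G S).Reachable u v := by
  rcases hbr with ⟨hΓ, rfl⟩ | ⟨a, b, hab, -, -, -, -, rfl⟩
  · obtain ⟨-, u', hu', hu'u⟩ := hu
    obtain ⟨-, v', hv', hv'v⟩ := hv
    exact hΓ.reachable_delAdj_of_adj hSP hu' hv' hu'u hv'v huS hvS
  · rcases eq_or_ne u v with rfl | hne
    · rfl
    have huv : G.Adj u v := by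
      rcases hu with rfl | rfl <;> rcases hv with rfl | rfl
      exacts [absurd rfl hne, hab, hab.symm, absurd rfl hne]
    exact (delAdj_adj huv huS hvS).reachable

end

namespace SimpleGraph.Walk

variable [DecidableEq V] {G : SimpleGraph V} {a b u w : V} {p : G.Walk a b}

lemma IsPath.idxOf_le_of_mem_support_takeUntil (hp : p.IsPath) (hu : u ∈ p.support)
    (hw : w ∈ (p.takeUntil u hu).support) : p.support.idxOf w ≤ p.support.idxOf u := by
  rcases eq_or_ne w u with rfl | hwu
  · rfl
  have hsplit : p.support =
      (p.takeUntil u hu).support.dropLast ++ (p.dropUntil u hu).support := by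
    conv_lhs => rw [← p.take_spec hu]
    exact support_append_eq_support_dropLast_append _ _
  have hw' : w ∈ (p.takeUntil u hu).support.dropLast := by
    rw [← dropLast_support_concat, List.mem_append, List.mem_singleton] at hw
    exact hw.resolve_right hwu
  have hu' : u ∉ (p.takeUntil u hu).support.dropLast := fun h =>
    List.disjoint_of_nodup_append (hsplit ▸ hp.support_nodup) h (start_mem_support _)
  rw [hsplit]
  exact (List.idxOf_append_lt_idxOf_append hw' hu').le

lemma IsPath.idxOf_le_of_mem_support_dropUntil (hp : p.IsPath) (hu : u ∈ p.support)
    (hw : w ∈ (p.dropUntil u hu).support) : p.support.idxOf u ≤ p.support.idxOf w := by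
  rcases eq_or_ne w u with rfl | hwu
  · rfl
  have hsplit : p.support = (p.takeUntil u hu).support ++ (p.dropUntil u hu).support.tail := by
    conv_lhs => rw [← p.take_spec hu]
    exact support_append _ _
  have hw' : w ∈ (p.dropUntil u hu).support.tail := by
    simpa [hwu] using (mem_support_iff _).mp hw
  have hw'' : w ∉ (p.takeUntil u hu).support := fun h =>
    List.disjoint_of_nodup_append (hsplit ▸ hp.support_nodup) h hw'
  rw [hsplit]
  exact (List.idxOf_append_lt_idxOf_append (end_mem_support _) hw'').le

variable {S : Set V} {s : V}

lemma IsPath.reachable_delAdj_of_idxOf_lt (hp : p.IsPath)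
    (hS : (S ∩ {v | v ∈ p.support}).Subsingleton) (hs : s ∈ S) (hsp : s ∈ p.support)
    (hu : u ∈ p.support) (hlt : p.support.idxOf u < p.support.idxOf s) :
    (delAdj G S).Reachable a u :=
  (p.takeUntil u hu).reachable_delAdj_s7 fun _ hw =>
    List.notMem_of_idxOf_ne hS hs hsp (p.support_takeUntil_subset_support hu hw)
      ((hp.idxOf_le_of_mem_support_takeUntil hu hw).trans_lt hlt).ne

lemma IsPath.reachable_delAdj_of_idxOf_gt (hp : p.IsPath)
    (hS : (S ∩ {v | v ∈ p.support}).Subsingleton) (hs : s ∈ S) (hsp : s ∈ p.support)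
    (hu : u ∈ p.support) (hlt : p.support.idxOf s < p.support.idxOf u) :
    (delAdj G S).Reachable u b :=
  (p.dropUntil u hu).reachable_delAdj_s7 fun _ hw =>
    List.notMem_of_idxOf_ne hS hs hsp (p.support_dropUntil_subset_support hu hw)
      (hlt.trans_le (hp.idxOf_le_of_mem_support_dropUntil hu hw)).ne'

end SimpleGraph.Walk

theorem stmt_7_general [DecidableEq V] (G : SimpleGraph V) (k : ℕ) (x y : V)
    (p : Fin k → G.Walk x y) (hp : ∀ i, (p i).IsPath)
    (S Q : Set V)
    (hQ : IsComp G {v | ∃ i, v ∈ (p i).support} Q)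
    (hSQ : S = {v | v ∉ Q ∧ ∃ u ∈ Q, G.Adj u v})
    (hone : ∀ i, (S ∩ {v | v ∈ (p i).support}).ncard = 1)
    (Γ A : Set V)
    (hbr : IsBridgeAttach G {v | ∃ i, v ∈ (p i).support} (fun i => (p i).edges) Γ A)
    (hstr : Straddles (fun i => (p i).support) A S) :
    (delAdj G S).Reachable x y := by
  obtain ⟨⟨i, u, huA, hui, s₁, hs₁, hs₁i, hus₁⟩, ⟨j, v, hvA, hvj, s₂, hs₂, hs₂j, hs₂v⟩⟩ := hstr
  have hsub : ∀ i, (S ∩ {v | v ∈ (p i).support}).Subsingleton := fun i => by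
    obtain ⟨_, h⟩ := Set.ncard_eq_one.mp (hone i)
    exact h ▸ Set.subsingleton_singleton
  have hSP : S ⊆ {v | ∃ i, v ∈ (p i).support} := hSQ ▸ hQ.nbhd_subset
  have huS : u ∉ S := List.notMem_of_idxOf_ne (hsub i) hs₁ hs₁i hui hus₁.ne
  have hvS : v ∉ S := List.notMem_of_idxOf_ne (hsub j) hs₂ hs₂j hvj hs₂v.ne'
  exact ((hp i).reachable_delAdj_of_idxOf_lt (hsub i) hs₁ hs₁i hui hus₁).trans <|
    (hbr.reachable_delAdj_s7 hSP huA hvA huS hvS).trans <|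
    (hp j).reachable_delAdj_of_idxOf_gt (hsub j) hs₂ hs₂j hvj hs₂v

/-- if `S = N(Q)` is a candidate with respect to `k` openly-disjoint paths `Π`
from `x` to `y` (one vertex of `S` on each path) and some bridge of `Π` straddles `S`, then
`x` and `y` are connected in `G \ S`. -/
theorem stmt_7 [Fintype V] [DecidableEq V] (G : SimpleGraph V) (k : ℕ)
    (hG : KConnected G k) (x y : V) (hxy : x ≠ y)
    (p : Fin k → G.Walk x y) (hp : ∀ i, (p i).IsPath)
    (hdisj : ∀ i j, i ≠ j → ∀ v, v ∈ (p i).support → v ∈ (p j).support →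
      v = x ∨ v = y)
    (S Q : Set V)
    (hQ : IsComp G {v | ∃ i, v ∈ (p i).support} Q)
    (hSQ : S = {v | v ∉ Q ∧ ∃ u ∈ Q, G.Adj u v})
    (hcard : S.ncard = k)
    (hone : ∀ i, (S ∩ {v | v ∈ (p i).support}).ncard = 1)
    (Γ A : Set V)
    (hbr : IsBridgeAttach G {v | ∃ i, v ∈ (p i).support} (fun i => (p i).edges) Γ A)
    (hstr : Straddles (fun i => (p i).support) A S) :
    (delAdj G S).Reachable x y :=
  stmt_7_general G k x y p hp S Q hQ hSQ hone Γ A hbr hstr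
end

section
/- Let S be a k-shredder of G with partition (C, R) where C is the largest-volume component and vol(R) ≤ ν, and suppose S is high-degree, i.e., every vertex of S has degree greater than ν. Let y be a vertex of a component Q of R. Then the set of vertices reachable from y in the subgraph of G induced on vertices of degree at most ν is exactly Q. -/
open SimpleGraph

variable {V : Type*}

/-! Neighbourhoods in `G \ S` and in the low-degree subgraph agree on every vertex of a small
component `Q`: a neighbour of `Q` outside `S` lies in `Q`, hence has degree at most
`vol R ≤ ν`, while the vertices of `S` have degree above `ν`. Two graphs whose adjacencies agree
on the component of `y` in one of them have the same component of `y`. -/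

lemma notMem_of_delAdj_reachable {G : SimpleGraph V} {S : Set V} {v u : V}
    (h : (delAdj G S).Reachable v u) (hv : v ∉ S) : u ∉ S := by
  obtain ⟨p⟩ := h
  induction p with
  | nil => exact hv
  | cons h _ ih => exact ih h.2.2

lemma IsComp.eq_setOf_reachable {G : SimpleGraph V} {S Q : Set V} (hQ : IsComp G S Q)
    {y : V} (hy : y ∈ Q) : Q = {u | (delAdj G S).Reachable y u} := by
  obtain ⟨v, -, rfl⟩ := hQ
  ext u
  exact ⟨fun hu => hy.symm.trans hu, fun hu => hy.trans hu⟩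

lemma IsComp.notMem_of_mem {G : SimpleGraph V} {S Q : Set V} (hQ : IsComp G S Q)
    {x : V} (hx : x ∈ Q) : x ∉ S := by
  obtain ⟨v, hv, rfl⟩ := hQ
  exact notMem_of_delAdj_reachable hx hv

lemma IsComp.eq_of_mem_s18 {G : SimpleGraph V} {S Q C : Set V} (hQ : IsComp G S Q)
    (hC : IsComp G S C) {x : V} (hxQ : x ∈ Q) (hxC : x ∈ C) : Q = C := by
  rw [hQ.eq_setOf_reachable hxQ, hC.eq_setOf_reachable hxC]

lemma degree_le_vol [Fintype V] (G : SimpleGraph V) [DecidableRel G.Adj]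
    {R : Set V} {u : V} (hu : u ∈ R) : G.degree u ≤ vol G R := by
  classical
  rw [vol, Set.ncard_eq_toFinset_card', ← card_neighborFinset_eq_degree]
  apply Finset.card_le_card_of_injOn (fun w => s(u, w))
  · intro w hw
    rw [Finset.mem_coe, mem_neighborFinset] at hw
    simp only [Finset.mem_coe, Set.mem_toFinset, Set.mem_ofPred_eq]
    exact ⟨hw, u, hu, Sym2.mem_mk_left u w⟩
  · intro w₁ _ w₂ _ h
    exact Sym2.congr_right.mp h

lemma SimpleGraph.Reachable.of_adj_closed {H K : SimpleGraph V} {Q : Set V}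
    (hQ : ∀ a ∈ Q, ∀ b, H.Adj a b → b ∈ Q ∧ K.Adj a b) {a b : V} (ha : a ∈ Q)
    (h : H.Reachable a b) : b ∈ Q ∧ K.Reachable a b := by
  obtain ⟨p⟩ := h
  induction p with
  | nil => exact ⟨ha, Reachable.refl _⟩
  | cons h _ ih =>
    obtain ⟨hw, hadj⟩ := hQ _ ha _ h
    obtain ⟨hb, hreach⟩ := ih hw
    exact ⟨hb, hadj.reachable.trans hreach⟩

lemma setOf_reachable_eq_of_adj_iff {H K : SimpleGraph V} {y : V}
    (hHK : ∀ a, H.Reachable y a → ∀ b, (H.Adj a b ↔ K.Adj a b)) :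
    {u | K.Reachable y u} = {u | H.Reachable y u} := by
  ext u
  constructor
  · intro hu
    refine (hu.of_adj_closed (H := K) (K := K) (Q := {u | H.Reachable y u}) ?_ .rfl).1
    intro a ha b hab
    exact ⟨ha.trans ((hHK a ha b).mpr hab).reachable, hab⟩
  · intro hu
    refine (hu.of_adj_closed (H := H) (K := K) (Q := {u | H.Reachable y u}) ?_ .rfl).2
    intro a ha b hab
    exact ⟨ha.trans hab.reachable, (hHK a ha b).mp hab⟩

theorem stmt_18_general [Fintype V] (G : SimpleGraph V) [DecidableRel G.Adj]
    (ν : ℕ)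
    (S C : Set V) (hC : IsComp G S C)
    (hR : vol G ((C ∪ S)ᶜ) ≤ ν)
    (hhigh : ∀ s ∈ S, ν < G.degree s)
    (Q : Set V) (hQ : IsComp G S Q) (hQC : Q ≠ C)
    (y : V) (hy : y ∈ Q) :
    {u | (restrict G {v | G.degree v ≤ ν}).Reachable y u} = Q := by
  have hlow : ∀ x ∈ Q, G.degree x ≤ ν := by
    intro x hx
    refine (degree_le_vol G ?_).trans hR
    have hxC : x ∉ C := fun hxC => hQC (hQ.eq_of_mem_s18 hC hx hxC)
    simpa [hxC] using hQ.notMem_of_mem hx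
  have hQ_eq := hQ.eq_setOf_reachable hy
  rw [hQ_eq]
  refine setOf_reachable_eq_of_adj_iff fun a ha b => ?_
  have haQ : a ∈ Q := hQ_eq ▸ ha
  have hnotMem_iff_low (hab : G.Adj a b) : b ∉ S ↔ G.degree b ≤ ν :=
    ⟨fun hbS => hlow b (hQ_eq ▸ ha.trans (Adj.reachable ⟨hab, hQ.notMem_of_mem haQ, hbS⟩)),
      fun hb hbS => (hhigh b hbS).not_ge hb⟩
  simp only [delAdj, restrict, Set.mem_ofPred_eq]
  exact ⟨fun ⟨hab, _, hb⟩ => ⟨hab, hlow a haQ, (hnotMem_iff_low hab).mp hb⟩,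
    fun ⟨hab, _, hb⟩ => ⟨hab, hQ.notMem_of_mem haQ, (hnotMem_iff_low hab).mpr hb⟩⟩

/-- let `S` be a high-degree `k`-shredder (every vertex of `S` has degree `> ν`)
whose non-largest components `R` satisfy `vol(R) ≤ ν`, and let `y` belong to a component
`Q ≠ C` of `G \ S`.  Then the set of vertices reachable from `y` in the subgraph of `G`
induced on the vertices of degree at most `ν` is exactly `Q`. -/
theorem stmt_18 [Fintype V] [DecidableEq V] (G : SimpleGraph V) [DecidableRel G.Adj]
    (k ν : ℕ) (hν : 0 < ν) (hG : KConnected G k)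
    (S C : Set V) (hS : IsShredder G k S) (hC : IsComp G S C)
    (hCmax : ∀ C', IsComp G S C' → vol G C' ≤ vol G C)
    (hR : vol G ((C ∪ S)ᶜ) ≤ ν)
    (hhigh : ∀ s ∈ S, ν < G.degree s)
    (Q : Set V) (hQ : IsComp G S Q) (hQC : Q ≠ C)
    (y : V) (hy : y ∈ Q) :
    {u | (restrict G {v | G.degree v ≤ ν}).Reachable y u} = Q :=
  stmt_18_general G ν S C hC hR hhigh Q hQ hQC y hy
end
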